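/- arXiv:2504.09489 — 2 statements merged into one kernel-verified Lean document; each statement's English description precedes it below -/
import Mathlib

section
/- Let γ : [0, l] → ℝ² be a continuous path. Define recursively x₁ = 0 and, for i ≥ 2, x_i = max { x ∈ [x_{i−1}, l] : dist(γ(x_{i−1}), γ(x)) ≤ 1/2 } (this maximum exists by compactness and continuity). Then for all indices j < k with x_k < l and x_j < x_k, we have dist(γ(x_j), γ(x_k)) ≥ 1/2. -/
/-! If `γ(x_j)` and `γ(x_k)` were closer than `1/2`, then `x_k` would compete in the maximum
defining `x_{j+1}`, so `x_{j+1} = x_k` by monotonicity of the sequence. By continuity, points just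
to the right of `x_k < l` are still closer than `1/2` to `γ(x_j)`, contradicting maximality. -/

open Set Filter Topology

theorem le_of_isGreatest_sublevel {f : ℝ → ℝ} {a b c p : ℝ}
    (hf : ContinuousWithinAt f (Ioi p) p)
    (hp : IsGreatest {t | a ≤ t ∧ t ≤ b ∧ f t ≤ c} p) (hpb : p < b) : c ≤ f p := by
  by_contra! hlt
  obtain ⟨t, hft, hpt, htb⟩ :=
    ((hf.eventually_lt_const hlt).and (Ioo_mem_nhdsGT hpb)).exists
  exact hpt.not_ge (hp.2 ⟨hp.1.1.trans hpt.le, htb.le, hft.le⟩)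

theorem stmt7_general (l : ℝ)
    (γ : ℝ → EuclideanSpace ℝ (Fin 2)) (hγ : ContinuousOn γ (Set.Icc 0 l))
    (x : ℕ → ℝ) (hx1 : x 1 = 0)
    (hxi : ∀ i : ℕ, 2 ≤ i →
      IsGreatest {t : ℝ | x (i - 1) ≤ t ∧ t ≤ l ∧
        dist (γ (x (i - 1))) (γ t) ≤ 1 / 2} (x i)) :
    ∀ j k : ℕ, 1 ≤ j → j < k → x k < l → x j < x k →
      1 / 2 ≤ dist (γ (x j)) (γ (x k)) := by
  intro j k hj hjk hkl hxjk
  have hnext : ∀ i ≥ 1, IsGreatest {t : ℝ | x i ≤ t ∧ t ≤ l ∧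
      dist (γ (x i)) (γ t) ≤ 1 / 2} (x (i + 1)) := fun i hi => by
    simpa using hxi (i + 1) (by omega)
  have hmono : MonotoneOn x {i | 1 ≤ i} :=
    monotoneOn_nat_Ici_of_le_succ fun i hi => (hnext i hi).1.1
  have hxk0 : 0 ≤ x k := hx1 ▸ hmono (show 1 ≤ 1 from le_rfl) (show 1 ≤ k by omega) (by omega)
  have hcont : ContinuousWithinAt (fun t => dist (γ (x j)) (γ t)) (Ioi (x k)) (x k) :=
    ContinuousWithinAt.mono_of_mem_nhdsWithin
      (continuousWithinAt_const.dist (hγ (x k) ⟨hxk0, hkl.le⟩))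
      (mem_of_superset (Ioo_mem_nhdsGT hkl) fun t ht => ⟨hxk0.trans ht.1.le, ht.2.le⟩)
  by_contra! hlt
  have hk_eq : x (j + 1) = x k :=
    le_antisymm (hmono (show 1 ≤ j + 1 by omega) (show 1 ≤ k by omega) (by omega))
      ((hnext j hj).2 ⟨hxjk.le, hkl.le, hlt.le⟩)
  exact hlt.not_ge (le_of_isGreatest_sublevel hcont (hk_eq ▸ hnext j hj) hkl)

theorem stmt7 (l : ℝ) (hl : 0 < l)
    (γ : ℝ → EuclideanSpace ℝ (Fin 2)) (hγ : ContinuousOn γ (Set.Icc 0 l))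
    (x : ℕ → ℝ) (hx1 : x 1 = 0)
    (hxi : ∀ i : ℕ, 2 ≤ i →
      IsGreatest {t : ℝ | x (i - 1) ≤ t ∧ t ≤ l ∧
        dist (γ (x (i - 1))) (γ t) ≤ 1 / 2} (x i)) :
    ∀ j k : ℕ, 1 ≤ j → j < k → x k < l → x j < x k →
      1 / 2 ≤ dist (γ (x j)) (γ (x k)) :=
  stmt7_general l γ hγ x hx1 hxi
end

section
/- Assume the fundamental lemma: there is a constant c = 10⁻¹⁰ such that for any unit square S_a of a packing and any S_b (another unit square of the packing or the boundary square) with dist(S_a, S_b) ≤ 1, there is an open disk of radius 2 containing S_a whose wasted area is at least c·θ(S_a, S_b). Then for any squares S_a, S_b of the packing joined by a continuous path γ : [0, l] → ℝ² (with γ(0) ∈ S_a, γ(l) ∈ S_b), the wasted area in the open 5-neighborhood of the image of γ is at least (c/1600)·θ(S_a, S_b). -/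
open Real Metric MeasureTheory

noncomputable section

abbrev Plane := EuclideanSpace ℝ (Fin 2)

/-- Unit direction vector at angle `φ`. -/
def dirVec (φ : ℝ) : Plane := WithLp.toLp 2 ![Real.cos φ, Real.sin φ]

/-- The (filled) unit square with a corner at `c` and orientation angle `φ`. -/
def unitSq (c : Plane) (φ : ℝ) : Set Plane :=
  {p | ∃ s t : ℝ, s ∈ Set.Icc (0 : ℝ) 1 ∧ t ∈ Set.Icc (0 : ℝ) 1 ∧
    p = c + s • dirVec φ + t • dirVec (φ + π / 2)}

/-- The (filled) axis-aligned large square of side `x`. -/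
def bigSq (x : ℝ) : Set Plane :=
  {p | p 0 ∈ Set.Icc (0 : ℝ) x ∧ p 1 ∈ Set.Icc (0 : ℝ) x}

/-- The angle between two squares with orientation angles `φ` and `ψ`:
the quotient metric on ℝ/(π/2)ℤ. -/
def sqAngle (φ ψ : ℝ) : ℝ :=
  sInf {d : ℝ | ∃ k : ℤ, d = |φ - ψ + k * (π / 2)|}

/-- The distance between two sets: the infimum of distances between their points. -/
def setDist (A B : Set Plane) : ℝ :=
  sInf {d : ℝ | ∃ a ∈ A, ∃ b ∈ B, d = dist a b}

/-- The wasted area of a measurable set `A`: the part of `A` inside the big square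
that is covered by no unit square of the packing. -/
def waste (x : ℝ) {k : ℕ} (ctr : Fin k → Plane) (ang : Fin k → ℝ) (A : Set Plane) :
    ENNReal :=
  volume ((A ∩ bigSq x) \ ⋃ i, unitSq (ctr i) (ang i))

/-- Roth--Vaughan's constant `c = 10⁻¹⁰`. -/
def rothC : ℝ := 10 ^ (-10 : ℤ)

open scoped Pointwise

/-!
If some point of the path is farther than `1/4` from the outside of the big square and from every
unit square, the disk of radius `1/4` around it is wasted, and its area `π/16` is far more than
needed. Otherwise every point of the path is `1/4`-close to a unit square or to the outside, and by
uniform continuity the path yields a chain of pairwise distinct squares (and the boundary) joining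
`S_a` to `S_b` in which consecutive members are at distance at most `1`. The fundamental lemma puts
a disk of radius `2` with waste at least `c θ` on each link, all inside the `5`-neighbourhood of the
path; the angles of the links add up to at least `θ(S_a, S_b)` by the triangle inequality in
`ℝ/(π/2)ℤ`. A disk of radius `6` holds at most `144` unit squares, so the disk of a link meets the
disks of at most `145` links, and a greedy choice of pairwise disjoint disks keeps `1/145` of the
total angle.
-/

lemma sqAngle_eq_dist (φ ψ : ℝ) :
    sqAngle φ ψ = dist (φ : AddCircle (π / 2)) (ψ : AddCircle (π / 2)) := by
  have hp : 0 < π / 2 := by positivity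
  set p := π / 2
  rw [dist_eq_norm, ← AddCircle.coe_sub, AddCircle.norm_eq' p hp]
  have key : ∀ z : ℝ, |φ - ψ + z * p| = p * |p⁻¹ * (φ - ψ) - (-z)| := fun z => by
    rw [← abs_of_pos hp, ← abs_mul, abs_of_pos hp]
    congr 1
    field_simp
    ring
  apply le_antisymm
  · refine csInf_le ⟨0, ?_⟩ ⟨-round (p⁻¹ * (φ - ψ)), ?_⟩
    · rintro _ ⟨k, rfl⟩
      positivity
    · rw [key]
      push_cast
      ring_nf
  · refine le_csInf ⟨_, 0, rfl⟩ ?_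
    rintro _ ⟨k, rfl⟩
    rw [key]
    have := round_le (p⁻¹ * (φ - ψ)) (-k)
    push_cast at this
    exact mul_le_mul_of_nonneg_left this hp.le

lemma sqAngle_comm (φ ψ : ℝ) : sqAngle φ ψ = sqAngle ψ φ := by
  simp only [sqAngle_eq_dist, dist_comm]

lemma sqAngle_nonneg (φ ψ : ℝ) : 0 ≤ sqAngle φ ψ :=
  sqAngle_eq_dist φ ψ ▸ dist_nonneg

lemma sqAngle_le_pi_div_four (φ ψ : ℝ) : sqAngle φ ψ ≤ π / 4 := by
  rw [sqAngle_eq_dist, dist_eq_norm]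
  refine (AddCircle.norm_le_half_period _ (by positivity)).trans_eq ?_
  rw [abs_of_pos (by positivity)]
  ring

lemma inner_dirVec (φ ψ : ℝ) : inner ℝ (dirVec φ) (dirVec ψ) = cos (φ - ψ) := by
  simp [dirVec, EuclideanSpace.inner_eq_star_dotProduct, cos_sub]
  ring

lemma norm_dirVec (φ : ℝ) : ‖dirVec φ‖ = 1 := by
  have h := inner_dirVec φ φ
  rw [sub_self, cos_zero, real_inner_self_eq_norm_sq] at h
  exact (pow_eq_one_iff_of_nonneg (norm_nonneg _) two_ne_zero).mp h

lemma orthonormal_dirVec (φ : ℝ) : Orthonormal ℝ ![dirVec φ, dirVec (φ + π / 2)] := by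
  rw [orthonormal_iff_ite]
  intro i j
  fin_cases i <;> fin_cases j <;> simp [inner_dirVec, norm_dirVec]

def sqFrame (φ : ℝ) : OrthonormalBasis (Fin 2) ℝ Plane :=
  OrthonormalBasis.mk (orthonormal_dirVec φ)
    ((orthonormal_dirVec φ).linearIndependent.span_eq_top_of_card_eq_finrank (by simp)).ge

lemma unitSq_eq_vadd_parallelepiped (c : Plane) (φ : ℝ) :
    unitSq c φ = c +ᵥ parallelepiped (sqFrame φ) := by
  ext p
  simp only [unitSq, sqFrame, OrthonormalBasis.coe_mk, Set.mem_vadd_set, mem_parallelepiped_iff]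
  constructor
  · rintro ⟨s, t, hs, ht, rfl⟩
    refine ⟨_, ⟨![s, t], ?_, rfl⟩, ?_⟩
    · simp only [Set.mem_Icc, Pi.le_def, Fin.forall_fin_two]
      exact ⟨⟨hs.1, ht.1⟩, hs.2, ht.2⟩
    · simp [Fin.sum_univ_two, vadd_eq_add, add_assoc]
  · rintro ⟨_, ⟨t, ht, rfl⟩, rfl⟩
    refine ⟨t 0, t 1, ⟨ht.1 0, ht.2 0⟩, ⟨ht.1 1, ht.2 1⟩, ?_⟩
    simp [Fin.sum_univ_two, vadd_eq_add, add_assoc]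

lemma self_mem_unitSq (c : Plane) (φ : ℝ) : c ∈ unitSq c φ :=
  ⟨0, 0, by simp, by simp, by simp⟩

lemma volume_unitSq (c : Plane) (φ : ℝ) : volume (unitSq c φ) = 1 := by
  rw [unitSq_eq_vadd_parallelepiped, measure_vadd, OrthonormalBasis.volume_parallelepiped]

lemma isCompact_unitSq (c : Plane) (φ : ℝ) : IsCompact (unitSq c φ) := by
  rw [unitSq_eq_vadd_parallelepiped]
  exact ((sqFrame φ).toBasis.parallelepiped.isCompact).vadd c

lemma setDist_le_dist {A B : Set Plane} {a b : Plane} (ha : a ∈ A) (hb : b ∈ B) :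
    setDist A B ≤ dist a b :=
  csInf_le ⟨0, by rintro _ ⟨_, _, _, _, rfl⟩; positivity⟩ ⟨a, ha, b, hb, rfl⟩

lemma setDist_le_infDist_add_infDist {A B : Set Plane} (hA : A.Nonempty) (hB : B.Nonempty)
    (z : Plane) : setDist A B ≤ infDist z A + infDist z B := by
  refine le_of_forall_pos_lt_add fun ε hε => ?_
  obtain ⟨a, ha, hza⟩ := (infDist_lt_iff hA).mp (lt_add_of_pos_right (infDist z A) (half_pos hε))
  obtain ⟨b, hb, hzb⟩ := (infDist_lt_iff hB).mp (lt_add_of_pos_right (infDist z B) (half_pos hε))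
  calc setDist A B ≤ dist a b := setDist_le_dist ha hb
    _ ≤ dist z a + dist z b := dist_triangle_left a b z
    _ < infDist z A + infDist z B + ε := by linarith

lemma segment_inter_frontier_nonempty {E : Type*} [NormedAddCommGroup E] [NormedSpace ℝ E]
    {s : Set E} {p q : E} (hp : p ∈ s) (hq : q ∉ s) : (segment ℝ p q ∩ frontier s).Nonempty := by
  by_contra h
  rw [Set.not_nonempty_iff_eq_empty, ← Set.disjoint_iff_inter_eq_empty] at h
  have hclosure : ∀ y ∈ segment ℝ p q, y ∈ closure s → y ∈ interior s := fun y hy hys =>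
    by_contra fun hyi => h.notMem_of_mem_left hy ⟨hys, hyi⟩
  have hsub : segment ℝ p q ⊆ interior s :=
    (convex_segment p q).isPreconnected.subset_of_closure_inter_subset isOpen_interior
      ⟨p, left_mem_segment ℝ p q, hclosure p (left_mem_segment ℝ p q) (subset_closure hp)⟩
      fun y ⟨hy, hyseg⟩ => hclosure y hyseg (closure_mono interior_subset hy)
  exact hq (interior_subset (hsub (right_mem_segment ℝ p q)))

lemma setDist_frontier_le_setDist_compl {A s : Set Plane} (hAs : A ⊆ s) (hA : A.Nonempty)
    (hs : sᶜ.Nonempty) : setDist A (frontier s) ≤ setDist A sᶜ := by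
  obtain ⟨a, ha⟩ := hA
  obtain ⟨b, hb⟩ := hs
  refine le_csInf ⟨_, a, ha, b, hb, rfl⟩ ?_
  rintro _ ⟨a, ha, b, hb, rfl⟩
  obtain ⟨w, hw, hwf⟩ := segment_inter_frontier_nonempty (hAs ha) hb
  calc setDist A (frontier s) ≤ dist a w := setDist_le_dist ha hwf
    _ ≤ dist a b := by
      rw [← dist_add_dist_of_mem_segment hw]
      exact le_add_of_nonneg_right dist_nonneg

open Finset in
lemma Finset.exists_separated_subset_sum_le {ι X : Type*} [DecidableEq ι] [PseudoMetricSpace X]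
    (Q : ι → X) (θ : ι → ℝ) {r : ℝ} (hr : 0 < r) (N : ℕ) (E : Finset ι)
    (hθ : ∀ i ∈ E, 0 ≤ θ i) (hE : ∀ i ∈ E, #{j ∈ E | dist (Q j) (Q i) < r} ≤ N) :
    ∃ S ⊆ E, (S : Set ι).Pairwise (fun i j => r ≤ dist (Q i) (Q j)) ∧
      ∑ i ∈ E, θ i ≤ N * ∑ i ∈ S, θ i := by
  induction E using Finset.strongInduction with
  | H E ih =>
  obtain rfl | hne := E.eq_empty_or_nonempty
  · exact ⟨∅, subset_refl _, by simp, by simp⟩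
  obtain ⟨i₀, hi₀, hmax⟩ := E.exists_max_image θ hne
  set D := {j ∈ E | dist (Q j) (Q i₀) < r}
  have hDE : D ⊆ E := filter_subset _ _
  have hi₀D : i₀ ∈ D := mem_filter.mpr ⟨hi₀, by rwa [dist_self]⟩
  have hfar : ∀ j ∈ E \ D, r ≤ dist (Q j) (Q i₀) := fun j hj => by
    simp only [D, mem_sdiff, mem_filter, not_and, not_lt] at hj
    exact hj.2 hj.1
  obtain ⟨S, hSE, hSsep, hSsum⟩ := ih (E \ D) (sdiff_ssubset hDE ⟨i₀, hi₀D⟩)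
    (fun i hi => hθ i (sdiff_subset hi))
    (fun i hi => (card_le_card (filter_subset_filter _ sdiff_subset)).trans
      (hE i (sdiff_subset hi)))
  have hi₀S : i₀ ∉ S := fun h => (mem_sdiff.mp (hSE h)).2 hi₀D
  refine ⟨insert i₀ S, insert_subset hi₀ (hSE.trans sdiff_subset), ?_, ?_⟩
  · rw [coe_insert, Set.pairwise_insert]
    refine ⟨hSsep, fun j hj _ => ⟨?_, hfar j (hSE hj)⟩⟩
    rw [dist_comm]
    exact hfar j (hSE hj)
  · have hDsum : ∑ j ∈ D, θ j ≤ N * θ i₀ :=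
      calc ∑ j ∈ D, θ j ≤ #D • θ i₀ := sum_le_card_nsmul _ _ _ fun j hj => hmax j (hDE hj)
        _ ≤ N * θ i₀ := by
          rw [nsmul_eq_mul]
          exact mul_le_mul_of_nonneg_right (by exact_mod_cast hE i₀ hi₀) (hθ i₀ hi₀)
    rw [← sum_sdiff hDE, sum_insert hi₀S]
    linarith

lemma dist_le_sum_dist_darts {V X : Type*} [PseudoMetricSpace X] {G : SimpleGraph V}
    (f : V → X) {u v : V} (p : G.Walk u v) :
    dist (f u) (f v) ≤ (p.darts.map fun d => dist (f d.fst) (f d.snd)).sum := by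
  induction p with
  | nil => simp
  | cons h p ih =>
    simp only [SimpleGraph.Walk.darts_cons, List.map_cons, List.sum_cons]
    exact (dist_triangle _ _ _).trans (add_le_add_right ih _)

lemma SimpleGraph.reachable_of_cover_Icc {V : Type*} {G : SimpleGraph V} {R : V → ℝ → Prop}
    {l δ : ℝ} (hl : 0 ≤ l) (hδ : 0 < δ) (hcover : ∀ t ∈ Set.Icc 0 l, ∃ v, R v t)
    (hstep : ∀ t ∈ Set.Icc 0 l, ∀ t' ∈ Set.Icc 0 l, t - δ ≤ t' → t' ≤ t →
      ∀ u v, R u t' → R v t → G.Reachable u v)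
    {u v : V} (hu : R u 0) (hv : R v l) : G.Reachable u v := by
  have key : ∀ n : ℕ, ∀ t ∈ Set.Icc 0 l, t ≤ n * δ → ∀ w, R w t → G.Reachable u w := by
    intro n
    induction n with
    | zero =>
      intro t ht htn w hw
      obtain rfl : t = 0 := le_antisymm (by simpa using htn) ht.1
      exact hstep 0 ⟨le_rfl, hl⟩ 0 ⟨le_rfl, hl⟩ (by linarith) le_rfl u w hu hw
    | succ n ih =>
      intro t ht htn w hw
      have ht' : max (t - δ) 0 ∈ Set.Icc 0 l :=
        ⟨le_max_right _ _, max_le (by linarith [ht.2]) hl⟩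
      obtain ⟨w', hw'⟩ := hcover _ ht'
      refine (ih _ ht' ?_ w' hw').trans
        (hstep t ht _ ht' (le_max_left _ _) (max_le (by linarith) ht.1) w' w hw' hw)
      push_cast at htn
      exact max_le (by linarith) (by positivity)
  obtain ⟨n, hn⟩ := exists_nat_ge (l / δ)
  exact key n l ⟨hl, le_rfl⟩ (by rwa [div_le_iff₀ hδ] at hn) v hv

lemma Finset.card_le_measure_of_pairwise_aedisjoint {α ι : Type*} [MeasurableSpace α]
    {μ : Measure α} (s : Finset ι) {A : ι → Set α} {B : Set α}
    (hA : ∀ i ∈ s, NullMeasurableSet (A i) μ)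
    (hd : (s : Set ι).Pairwise fun i j => AEDisjoint μ (A i) (A j))
    (hA1 : ∀ i ∈ s, 1 ≤ μ (A i)) (hAB : ∀ i ∈ s, A i ⊆ B) : (s.card : ENNReal) ≤ μ B :=
  calc (s.card : ENNReal) = ∑ _i ∈ s, 1 := by simp
    _ ≤ ∑ i ∈ s, μ (A i) := Finset.sum_le_sum hA1
    _ = μ (⋃ i ∈ s, A i) := (measure_biUnion_finset₀ hd hA).symm
    _ ≤ μ B := measure_mono (Set.iUnion₂_subset hAB)

lemma rothC_pos : 0 < rothC := by
  rw [rothC]; positivity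

section Packing

variable (x : ℝ) {k : ℕ} (ctr : Fin k → Plane) (ang : Fin k → ℝ)

def nodeSet : Option (Fin k) → Set Plane :=
  fun v => v.elim (frontier (bigSq x)) fun j => unitSq (ctr j) (ang j)

def nodeAng : Option (Fin k) → ℝ :=
  fun v => v.elim 0 ang

/-- Closeness of a point to the boundary node `none` is measured to the complement of the big
square, so that points of the path outside the big square are close to it. -/
def nodeRegion : Option (Fin k) → Set Plane :=
  fun v => v.elim (bigSq x)ᶜ fun j => unitSq (ctr j) (ang j)

/-- The radii are chosen so that adjacent nodes are at distance at most `1/4 + 1/2 + 1/4 = 1`,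
as the fundamental lemma requires. -/
def chainGraph (P : Set Plane) : SimpleGraph (Option (Fin k)) where
  Adj u v := u ≠ v ∧ ∃ z ∈ P, ∃ z' ∈ P, dist z z' ≤ 1 / 2 ∧
    infDist z (nodeRegion x ctr ang u) ≤ 1 / 4 ∧ infDist z' (nodeRegion x ctr ang v) ≤ 1 / 4
  symm := ⟨fun _ _ ⟨huv, z, hz, z', hz', hzz', hu, hv⟩ =>
    ⟨huv.symm, z', hz', z, hz, by rwa [dist_comm], hv, hu⟩⟩
  loopless := ⟨fun _ h => h.1 rfl⟩

def FundamentalLemma : Prop :=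
  ∀ a : Fin k, ∀ b : Option (Fin k), b ≠ some a →
    setDist (unitSq (ctr a) (ang a)) (nodeSet x ctr ang b) ≤ 1 →
    ∃ p : Plane, unitSq (ctr a) (ang a) ⊆ ball p 2 ∧
      ENNReal.ofReal (rothC * sqAngle (ang a) (nodeAng ang b)) ≤ waste x ctr ang (ball p 2)

lemma isClosed_bigSq : IsClosed (bigSq x) :=
  (isClosed_Icc.preimage (by fun_prop)).inter (isClosed_Icc.preimage (by fun_prop))

lemma bigSq_compl_nonempty : (bigSq x)ᶜ.Nonempty :=
  ⟨WithLp.toLp 2 ![-1, -1], fun h => by norm_num [bigSq] at h⟩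

lemma nodeRegion_nonempty (v : Option (Fin k)) : (nodeRegion x ctr ang v).Nonempty := by
  cases v with
  | none => exact bigSq_compl_nonempty x
  | some j => exact ⟨_, self_mem_unitSq _ _⟩

variable {x ctr ang}

lemma setDist_unitSq_nodeSet_le_one (hsub : ∀ i, unitSq (ctr i) (ang i) ⊆ bigSq x) {i : Fin k}
    {v : Option (Fin k)} {z z' : Plane} (hz : infDist z (unitSq (ctr i) (ang i)) ≤ 1 / 4)
    (hz' : infDist z' (nodeRegion x ctr ang v) ≤ 1 / 4) (hzz' : dist z z' ≤ 1 / 2) :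
    setDist (unitSq (ctr i) (ang i)) (nodeSet x ctr ang v) ≤ 1 := by
  have hregion : setDist (unitSq (ctr i) (ang i)) (nodeRegion x ctr ang v) ≤ 1 := by
    calc _ ≤ infDist z (unitSq (ctr i) (ang i)) + infDist z (nodeRegion x ctr ang v) :=
          setDist_le_infDist_add_infDist ⟨_, self_mem_unitSq _ _⟩
            (nodeRegion_nonempty x ctr ang v) z
      _ ≤ 1 / 4 + (1 / 4 + 1 / 2) :=
          add_le_add hz ((infDist_le_infDist_add_dist).trans (add_le_add hz' hzz'))
      _ = 1 := by norm_num
  cases v with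
  | none =>
    exact (setDist_frontier_le_setDist_compl (hsub i) ⟨_, self_mem_unitSq _ _⟩
      (bigSq_compl_nonempty x)).trans hregion
  | some j => exact hregion

lemma ball_subset_thickening_of_infDist_le {P A : Set Plane} {z q : Plane} (hz : z ∈ P)
    (hA : A.Nonempty) (hzA : infDist z A ≤ 1 / 4) (hAq : A ⊆ ball q 2) :
    ball q 2 ⊆ thickening 5 P := by
  obtain ⟨a, ha, hza⟩ := (infDist_lt_iff hA).mp (hzA.trans_lt (by norm_num : (1 / 4 : ℝ) < 1))
  intro y hy
  refine mem_thickening_iff.mpr ⟨z, hz, ?_⟩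
  calc dist y z ≤ dist y q + dist q a + dist a z := dist_triangle4 _ _ _ _
    _ < 2 + 2 + 1 := by
      gcongr
      · exact hy
      · rw [dist_comm]; exact hAq ha
      · rwa [dist_comm]
    _ = 5 := by norm_num

lemma exists_ball_of_adj_some (hsub : ∀ i, unitSq (ctr i) (ang i) ⊆ bigSq x)
    (hfund : FundamentalLemma x ctr ang) {P : Set Plane} {i : Fin k} {v : Option (Fin k)}
    (h : (chainGraph x ctr ang P).Adj (some i) v) :
    ∃ q, unitSq (ctr i) (ang i) ⊆ ball q 2 ∧
      ENNReal.ofReal (rothC * sqAngle (ang i) (nodeAng ang v)) ≤ waste x ctr ang (ball q 2) ∧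
      ball q 2 ⊆ thickening 5 P := by
  obtain ⟨hne, z, hz, z', -, hzz', hzi, hz'v⟩ := h
  obtain ⟨q, hiq, hwaste⟩ :=
    hfund i v hne.symm (setDist_unitSq_nodeSet_le_one hsub hzi hz'v hzz')
  exact ⟨q, hiq, hwaste, ball_subset_thickening_of_infDist_le hz ⟨_, self_mem_unitSq _ _⟩ hzi hiq⟩

lemma exists_ball_of_adj (hsub : ∀ i, unitSq (ctr i) (ang i) ⊆ bigSq x)
    (hfund : FundamentalLemma x ctr ang) {P : Set Plane} {u v : Option (Fin k)}
    (h : (chainGraph x ctr ang P).Adj u v) :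
    ∃ q, (∀ i, u = some i → unitSq (ctr i) (ang i) ⊆ ball q 2) ∧
      ENNReal.ofReal (rothC * sqAngle (nodeAng ang u) (nodeAng ang v)) ≤
        waste x ctr ang (ball q 2) ∧
      ball q 2 ⊆ thickening 5 P := by
  cases u with
  | some i =>
    obtain ⟨q, hiq, hwaste, hthick⟩ := exists_ball_of_adj_some hsub hfund h
    exact ⟨q, fun j hj => Option.some_injective _ hj ▸ hiq, hwaste, hthick⟩
  | none =>
    obtain ⟨j, rfl⟩ := Option.ne_none_iff_exists'.mp h.1.symm
    obtain ⟨q, -, hwaste, hthick⟩ := exists_ball_of_adj_some hsub hfund h.symm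
    exact ⟨q, by simp, sqAngle_comm (ang j) 0 ▸ hwaste, hthick⟩

open Finset Classical in
lemma card_unitSq_subset_ball_le
    (hdisj : ∀ i j, i ≠ j → volume (unitSq (ctr i) (ang i) ∩ unitSq (ctr j) (ang j)) = 0)
    (y : Plane) : #{i | unitSq (ctr i) (ang i) ⊆ ball y 6} ≤ 144 := by
  have h := card_le_measure_of_pairwise_aedisjoint (μ := volume)
    {i | unitSq (ctr i) (ang i) ⊆ ball y 6}
    (fun i _ => (isCompact_unitSq _ _).isClosed.measurableSet.nullMeasurableSet)
    (fun i _ j _ hij => hdisj i j hij) (fun i _ => (volume_unitSq _ _).ge)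
    (fun i hi => (mem_filter.mp hi).2)
  rw [EuclideanSpace.volume_ball_fin_two, ← ENNReal.ofReal_pow (by norm_num),
    ← ENNReal.ofReal_mul (by positivity)] at h
  have h144 : ENNReal.ofReal (6 ^ 2 * π) ≤ ENNReal.ofReal 144 :=
    ENNReal.ofReal_le_ofReal (by nlinarith [pi_le_four])
  rw [ENNReal.ofReal_ofNat] at h144
  exact_mod_cast h.trans h144

open Finset in
lemma card_darts_dist_lt_le
    (hdisj : ∀ i j, i ≠ j → volume (unitSq (ctr i) (ang i) ∩ unitSq (ctr j) (ang j)) = 0)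
    {G : SimpleGraph (Option (Fin k))} {u v : Option (Fin k)} {p : G.Walk u v} (hp : p.IsPath)
    (Q : G.Dart → Plane) (hQ : ∀ d i, d.fst = some i → unitSq (ctr i) (ang i) ⊆ ball (Q d) 2)
    (y : Plane) : #{d ∈ p.darts.toFinset | dist (Q d) y < 4} ≤ 145 := by
  classical
  set F := {d ∈ p.darts.toFinset | dist (Q d) y < 4}
  set inBall := ({i | unitSq (ctr i) (ang i) ⊆ ball y 6} : Finset (Fin k))
  have hnodup : (p.darts.map (·.fst)).Nodup := by
    rw [SimpleGraph.Walk.map_fst_darts]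
    exact hp.support_nodup.sublist (List.dropLast_sublist _)
  have hinj : Set.InjOn (·.fst) (F : Set G.Dart) := fun d hd d' hd' h =>
    List.inj_on_of_nodup_map hnodup (List.mem_toFinset.mp (mem_filter.mp hd).1)
      (List.mem_toFinset.mp (mem_filter.mp hd').1) h
  have himg : F.image (·.fst) ⊆ insert none (inBall.image some) := by
    intro _ he
    obtain ⟨d, hd, rfl⟩ := mem_image.mp he
    cases hfst : d.fst with
    | none => exact mem_insert_self _ _
    | some i =>
      refine mem_insert_of_mem (mem_image_of_mem _ (mem_filter.mpr ⟨mem_univ _, fun z hz => ?_⟩))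
      have hzQ : dist z (Q d) < 2 := hQ d i hfst hz
      have hQy : dist (Q d) y < 4 := (mem_filter.mp hd).2
      exact mem_ball.mpr ((dist_triangle _ _ _).trans_lt (by linarith))
  calc #F = #(F.image (·.fst)) := (card_image_of_injOn hinj).symm
    _ ≤ #(inBall.image some) + 1 := (card_le_card himg).trans (card_insert_le _ _)
    _ ≤ 144 + 1 := by grw [card_image_le, card_unitSq_subset_ball_le hdisj y]

lemma waste_eq_restrict (A : Set Plane) :
    waste x ctr ang A = volume.restrict (bigSq x \ ⋃ i, unitSq (ctr i) (ang i)) A := by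
  rw [waste, Measure.restrict_apply' ((isClosed_bigSq x).measurableSet.diff
    (.iUnion fun i => (isCompact_unitSq _ _).isClosed.measurableSet)), Set.inter_sdiff_assoc]

open Finset in
lemma le_waste_thickening_of_reachable (hsub : ∀ i, unitSq (ctr i) (ang i) ⊆ bigSq x)
    (hdisj : ∀ i j, i ≠ j → volume (unitSq (ctr i) (ang i) ∩ unitSq (ctr j) (ang j)) = 0)
    (hfund : FundamentalLemma x ctr ang) {P : Set Plane} {a b : Fin k}
    (h : (chainGraph x ctr ang P).Reachable (some a) (some b)) :
    ENNReal.ofReal (rothC / 1600 * sqAngle (ang a) (ang b)) ≤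
      waste x ctr ang (thickening 5 P) := by
  classical
  obtain ⟨w⟩ := h
  have hp : w.bypass.IsPath := w.bypass_isPath
  choose Q hQsq hQwaste hQthick using
    fun d : (chainGraph x ctr ang P).Dart => exists_ball_of_adj hsub hfund d.adj
  set θ := fun d : (chainGraph x ctr ang P).Dart =>
    sqAngle (nodeAng ang d.fst) (nodeAng ang d.snd)
  obtain ⟨S, -, hSsep, hES⟩ := w.bypass.darts.toFinset.exists_separated_subset_sum_le Q θ
    (by norm_num : (0 : ℝ) < 4) 145 (fun d _ => sqAngle_nonneg _ _)
    (fun d _ => card_darts_dist_lt_le hdisj hp Q hQsq (Q d))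
  have hangle : sqAngle (ang a) (ang b) ≤ ∑ d ∈ w.bypass.darts.toFinset, θ d := by
    rw [List.sum_toFinset _ (SimpleGraph.Walk.darts_nodup_of_support_nodup hp.support_nodup)]
    simp only [θ, sqAngle_eq_dist]
    exact dist_le_sum_dist_darts (fun v => (nodeAng ang v : AddCircle (π / 2))) w.bypass
  have hreal : rothC / 1600 * sqAngle (ang a) (ang b) ≤ ∑ d ∈ S, rothC * θ d := by
    have hS : 0 ≤ ∑ d ∈ S, θ d := sum_nonneg fun d _ => sqAngle_nonneg _ _
    rw [← mul_sum]
    calc rothC / 1600 * sqAngle (ang a) (ang b) ≤ rothC / 1600 * (145 * ∑ d ∈ S, θ d) := by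
          have := rothC_pos
          gcongr
          exact_mod_cast hangle.trans hES
      _ ≤ rothC * ∑ d ∈ S, θ d := by nlinarith [rothC_pos]
  have hballs : (S : Set _).PairwiseDisjoint fun d => ball (Q d) 2 := fun d hd d' hd' hne =>
    ball_disjoint_ball (by linarith [hSsep hd hd' hne])
  simp only [waste_eq_restrict] at hQwaste ⊢
  calc ENNReal.ofReal (rothC / 1600 * sqAngle (ang a) (ang b))
      ≤ ∑ d ∈ S, ENNReal.ofReal (rothC * θ d) := by
        rw [← ENNReal.ofReal_sum_of_nonneg fun d _ =>
          mul_nonneg rothC_pos.le (sqAngle_nonneg _ _)]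
        exact ENNReal.ofReal_le_ofReal hreal
    _ ≤ ∑ d ∈ S, _ := sum_le_sum fun d _ => hQwaste d
    _ = _ := (measure_biUnion_finset hballs fun _ _ => measurableSet_ball).symm
    _ ≤ _ := measure_mono (Set.iUnion₂_subset fun d _ => hQthick d)

lemma le_waste_thickening_of_forall_lt_infDist {P : Set Plane} {z : Plane} (hz : z ∈ P)
    (hfar : ∀ v, 1 / 4 < infDist z (nodeRegion x ctr ang v)) (φ ψ : ℝ) :
    ENNReal.ofReal (rothC / 1600 * sqAngle φ ψ) ≤ waste x ctr ang (thickening 5 P) := by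
  have hball : ball z (1 / 4) ⊆ (thickening 5 P ∩ bigSq x) \ ⋃ i, unitSq (ctr i) (ang i) := by
    intro y hy
    have hfar' : ∀ v, y ∉ nodeRegion x ctr ang v := fun v =>
      notMem_of_dist_lt_infDist ((mem_ball'.mp hy).trans (hfar v))
    refine ⟨⟨ball_subset_thickening hz _ (ball_subset_ball (by norm_num) hy), ?_⟩, ?_⟩
    · simpa [nodeRegion] using hfar' none
    · simpa [nodeRegion] using fun i => hfar' (some i)
  refine le_trans ?_ (measure_mono hball)
  rw [EuclideanSpace.volume_ball_fin_two, ← ENNReal.ofReal_pow (by norm_num),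
    ← ENNReal.ofReal_mul (by positivity)]
  refine ENNReal.ofReal_le_ofReal ?_
  have hc : rothC ≤ 1 := by rw [rothC]; norm_num
  nlinarith [sqAngle_le_pi_div_four φ ψ, sqAngle_nonneg φ ψ, rothC_pos, pi_pos]

end Packing

theorem stmt14 (x : ℝ) (k : ℕ) (ctr : Fin k → Plane) (ang : Fin k → ℝ)
    (hsub : ∀ i, unitSq (ctr i) (ang i) ⊆ bigSq x)
    (hdisj : ∀ i j, i ≠ j →
      volume (unitSq (ctr i) (ang i) ∩ unitSq (ctr j) (ang j)) = 0)
    -- the fundamental lemma: `b = none` denotes the boundary of the big square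
    -- (with orientation angle `0`), `b = some j` denotes the `j`-th unit square.
    (hfund : ∀ a : Fin k, ∀ b : Option (Fin k), b ≠ some a →
      setDist (unitSq (ctr a) (ang a))
          (b.elim (frontier (bigSq x)) (fun j => unitSq (ctr j) (ang j))) ≤ 1 →
      ∃ p : Plane, unitSq (ctr a) (ang a) ⊆ ball p 2 ∧
        ENNReal.ofReal (rothC * sqAngle (ang a) (b.elim 0 ang)) ≤
          waste x ctr ang (ball p 2))
    (a b : Fin k) (l : ℝ) (hl : 0 ≤ l) (γ : ℝ → Plane)
    (hγ : ContinuousOn γ (Set.Icc 0 l))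
    (hγ0 : γ 0 ∈ unitSq (ctr a) (ang a)) (hγl : γ l ∈ unitSq (ctr b) (ang b)) :
    ENNReal.ofReal (rothC / 1600 * sqAngle (ang a) (ang b)) ≤
      waste x ctr ang (Metric.thickening 5 (γ '' Set.Icc 0 l)) := by
  by_cases hgap : ∃ t ∈ Set.Icc 0 l, ∀ v, 1 / 4 < infDist (γ t) (nodeRegion x ctr ang v)
  · obtain ⟨t, ht, hfar⟩ := hgap
    exact le_waste_thickening_of_forall_lt_infDist (Set.mem_image_of_mem γ ht) hfar _ _
  push Not at hgap
  refine le_waste_thickening_of_reachable hsub hdisj hfund ?_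
  obtain ⟨δ, hδ, hγδ⟩ := Metric.uniformContinuousOn_iff_le.mp
    (isCompact_Icc.uniformContinuousOn_of_continuous hγ) (1 / 2) (by norm_num)
  have hnear : ∀ {t i}, γ t ∈ unitSq (ctr i) (ang i) →
      infDist (γ t) (nodeRegion x ctr ang (some i)) ≤ 1 / 4 := fun h =>
    (infDist_zero_of_mem (s := nodeRegion x ctr ang (some _)) h).trans_le (by norm_num)
  refine SimpleGraph.reachable_of_cover_Icc hl hδ hgap ?_ (hnear hγ0) (hnear hγl)
  intro t ht t' ht' htt' ht't u v hu hv
  by_cases huv : u = v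
  · exact huv ▸ SimpleGraph.Reachable.refl u
  · refine SimpleGraph.Adj.reachable ⟨huv, γ t', Set.mem_image_of_mem γ ht', γ t,
      Set.mem_image_of_mem γ ht, hγδ _ ht' _ ht ?_, hu, hv⟩
    rw [Real.dist_eq, abs_of_nonpos (by linarith)]
    linarith
end
end
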